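/- Let Ω be the Gaussian probability amplitude on ℝⁿ with mean η and position covariance matrix V. Then the nonclassical momentum covariance matrix (Ṽ_nc)_{jk} := −ħ² ∫ Ω ∂_j∂_kΩ dq satisfies Ṽ_nc = (ħ²/4) V⁻¹; equivalently, V · Ṽ_nc = (ħ²/4) Iₙ. -/

import Mathlib

open MeasureTheory Matrix

/-- Partial derivative `∂ⱼ f` of a function on `ℝⁿ`. -/
noncomputable def pd {n : ℕ} (j : Fin n) (f : (Fin n → ℝ) → ℝ) (q : Fin n → ℝ) : ℝ :=
  fderiv ℝ f q (Pi.single j 1)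

/-- The nonclassical momentum covariance matrix `(Ṽnc)ⱼₖ = -ħ² ∫ Ω ∂ⱼ∂ₖΩ`. -/
noncomputable def Vnc {n : ℕ} (hbar : ℝ) (Ω : (Fin n → ℝ) → ℝ) :
    Matrix (Fin n) (Fin n) ℝ :=
  Matrix.of fun j k => -hbar ^ 2 * ∫ q, Ω q * pd j (pd k Ω) q

/-- The Gaussian probability amplitude on `ℝⁿ` with mean `η` and position covariance
matrix `V`:  `Ω(q) = ((2π)ⁿ det V)^{-1/4} exp(-(1/4)(q-η)⋅V⁻¹(q-η))`. -/
noncomputable def gaussAmp {n : ℕ} (η : Fin n → ℝ) (V : Matrix (Fin n) (Fin n) ℝ)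
    (q : Fin n → ℝ) : ℝ :=
  ((2 * Real.pi) ^ n * V.det) ^ (-(1 / 4 : ℝ)) *
    Real.exp (-(1 / 4) * ((q - η) ⬝ᵥ V⁻¹.mulVec (q - η)))

/-!
With `a := V⁻¹ (q - η)` one finds `Ω ∂ⱼ∂ₖΩ = (aⱼ aₖ / 4 - (V⁻¹)ⱼₖ / 2) Ω²`, and `Ω²` is the
density of the normal law with mean `η` and covariance `V`. Its second moments
`∫ (u ⬝ (q - η)) (w ⬝ (q - η)) Ω² = u ⬝ V w` follow from the substitution `q = S x + η` with
`V = S Sᵀ`, which turns `Ω²` into the standard Gaussian on `ℝⁿ`, a product of one-dimensional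
Gaussians. Hence `∫ Ω ∂ⱼ∂ₖΩ = (V⁻¹ V V⁻¹)ⱼₖ / 4 - (V⁻¹)ⱼₖ / 2 = -(V⁻¹)ⱼₖ / 4`.
-/

open Real

lemma integral_exp_neg_half_sq : ∫ t : ℝ, exp (-(1 / 2) * t ^ 2) = √(2 * π) := by
  rw [integral_gaussian, div_div_eq_mul_div, div_one, mul_comm]

lemma integral_mul_exp_neg_half_sq : ∫ t : ℝ, t * exp (-(1 / 2) * t ^ 2) = 0 := by
  have h := integral_neg_eq_self (fun t : ℝ => t * exp (-(1 / 2) * t ^ 2)) volume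
  simp only [neg_sq, neg_mul _ (exp _), integral_neg] at h
  linarith

lemma integrable_sq_mul_exp_neg_half_sq :
    Integrable fun t : ℝ => t ^ 2 * exp (-(1 / 2) * t ^ 2) := by
  simpa only [rpow_two] using
    integrable_rpow_mul_exp_neg_mul_sq (b := 1 / 2) (by norm_num) (s := 2) (by norm_num)

lemma integral_sq_mul_exp_neg_half_sq : ∫ t : ℝ, t ^ 2 * exp (-(1 / 2) * t ^ 2) = √(2 * π) := by
  have hderiv (t : ℝ) :
      HasDerivAt (fun t => -exp (-(1 / 2) * t ^ 2)) (t * exp (-(1 / 2) * t ^ 2)) t := by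
    refine (((hasDerivAt_pow 2 t).const_mul (-(1 / 2) : ℝ)).exp).fun_neg.congr_deriv ?_
    norm_num
    ring
  have hparts := integral_mul_deriv_eq_deriv_mul_of_integrable (u := id) (u' := fun _ => (1 : ℝ))
    (fun t _ => hasDerivAt_id t) (fun t _ => hderiv t) ?_ ?_ ?_
  · simp only [id, one_mul, integral_neg, neg_neg, ← mul_assoc, ← sq] at hparts
    rw [hparts, integral_exp_neg_half_sq]
  · simpa only [Pi.mul_def, id, ← mul_assoc, ← sq] using integrable_sq_mul_exp_neg_half_sq
  · simpa [Pi.mul_def] using (integrable_exp_neg_mul_sq (b := 1 / 2) (by norm_num)).neg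
  · simpa [Pi.mul_def] using (integrable_mul_exp_neg_mul_sq (b := 1 / 2) (by norm_num)).neg

section PairMomentFactor

variable {ι : Type*} [DecidableEq ι]

noncomputable def pairMomentFactor (a b i : ι) (t : ℝ) : ℝ :=
  (if i = a then t else 1) * (if i = b then t else 1) * exp (-(1 / 2) * t ^ 2)

lemma integrable_pairMomentFactor (a b i : ι) : Integrable (pairMomentFactor a b i) := by
  have h0 : Integrable fun t : ℝ => exp (-(1 / 2) * t ^ 2) :=
    integrable_exp_neg_mul_sq (by norm_num)
  have h1 : Integrable fun t : ℝ => t * exp (-(1 / 2) * t ^ 2) :=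
    integrable_mul_exp_neg_mul_sq (by norm_num)
  have h2 : Integrable fun t : ℝ => t * t * exp (-(1 / 2) * t ^ 2) := by
    simpa only [sq] using integrable_sq_mul_exp_neg_half_sq
  unfold pairMomentFactor
  split_ifs <;> simpa only [one_mul, mul_one]

lemma integral_pairMomentFactor_self (a i : ι) :
    ∫ t, pairMomentFactor a a i t = √(2 * π) := by
  unfold pairMomentFactor
  split_ifs
  · simpa only [← sq] using integral_sq_mul_exp_neg_half_sq
  · simpa only [one_mul] using integral_exp_neg_half_sq

lemma integral_pairMomentFactor_left {a b : ι} (hab : a ≠ b) :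
    ∫ t, pairMomentFactor a b a t = 0 := by
  simpa only [pairMomentFactor, ↓reduceIte, if_neg hab, mul_one] using
    integral_mul_exp_neg_half_sq

end PairMomentFactor

section StandardGaussian

variable {ι : Type*} [Fintype ι]

lemma exp_neg_half_dotProduct_self (x : ι → ℝ) :
    exp (-(1 / 2) * (x ⬝ᵥ x)) = ∏ i, exp (-(1 / 2) * x i ^ 2) := by
  simp only [dotProduct, Finset.mul_sum, exp_sum, sq]

lemma integrable_exp_neg_half_dotProduct_self :
    Integrable fun x : ι → ℝ => exp (-(1 / 2) * (x ⬝ᵥ x)) := by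
  have h := Integrable.fintype_prod (f := fun (_ : ι) (t : ℝ) => exp (-(1 / 2) * t ^ 2))
    fun _ => integrable_exp_neg_mul_sq (by norm_num)
  rw [← volume_pi] at h
  simpa only [exp_neg_half_dotProduct_self] using h

lemma integral_exp_neg_half_dotProduct_self :
    ∫ x : ι → ℝ, exp (-(1 / 2) * (x ⬝ᵥ x)) = √(2 * π) ^ Fintype.card ι := by
  simp only [exp_neg_half_dotProduct_self, volume_pi]
  rw [integral_fintype_prod_eq_pow (fun t : ℝ => exp (-(1 / 2) * t ^ 2)),
    integral_exp_neg_half_sq]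

variable [DecidableEq ι]

lemma prod_pairMomentFactor (a b : ι) (x : ι → ℝ) :
    ∏ i, pairMomentFactor a b i (x i) = x a * x b * exp (-(1 / 2) * (x ⬝ᵥ x)) := by
  simp only [pairMomentFactor, Finset.prod_mul_distrib, Finset.prod_ite_eq', Finset.mem_univ,
    if_true, exp_neg_half_dotProduct_self]

lemma integrable_mul_mul_exp_neg_half_dotProduct_self (a b : ι) :
    Integrable fun x : ι → ℝ => x a * x b * exp (-(1 / 2) * (x ⬝ᵥ x)) := by
  have h := Integrable.fintype_prod (integrable_pairMomentFactor a b)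
  rw [← volume_pi] at h
  simpa only [prod_pairMomentFactor] using h

lemma integral_mul_mul_exp_neg_half_dotProduct_self (a b : ι) :
    ∫ x : ι → ℝ, x a * x b * exp (-(1 / 2) * (x ⬝ᵥ x)) =
      if a = b then √(2 * π) ^ Fintype.card ι else 0 := by
  simp only [← prod_pairMomentFactor, volume_pi, integral_fintype_prod_eq_prod]
  split_ifs with hab
  · subst hab
    simp only [integral_pairMomentFactor_self, Finset.prod_const, Finset.card_univ]
  · exact Finset.prod_eq_zero (Finset.mem_univ a) (integral_pairMomentFactor_left hab)

lemma integral_quadratic_mul_exp_neg_half_dotProduct_self (α β : ℝ) (u w : ι → ℝ) :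
    ∫ x : ι → ℝ, (α * ((u ⬝ᵥ x) * (w ⬝ᵥ x)) + β) * exp (-(1 / 2) * (x ⬝ᵥ x)) =
      (α * (u ⬝ᵥ w) + β) * √(2 * π) ^ Fintype.card ι := by
  have hexpand : (fun x : ι → ℝ => (α * ((u ⬝ᵥ x) * (w ⬝ᵥ x)) + β) * exp (-(1 / 2) * (x ⬝ᵥ x))) =
      fun x => ∑ a, ∑ b, α * (u a * w b) * (x a * x b * exp (-(1 / 2) * (x ⬝ᵥ x))) +
        β * exp (-(1 / 2) * (x ⬝ᵥ x)) := by
    ext x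
    have hprod : (u ⬝ᵥ x) * (w ⬝ᵥ x) = ∑ a, ∑ b, u a * w b * (x a * x b) := by
      rw [dotProduct, dotProduct, Finset.sum_mul_sum]
      exact Finset.sum_congr rfl fun a _ => Finset.sum_congr rfl fun b _ => by ring
    rw [hprod, Finset.mul_sum, add_mul, Finset.sum_mul]
    congr 1
    refine Finset.sum_congr rfl fun a _ => ?_
    rw [Finset.mul_sum, Finset.sum_mul]
    exact Finset.sum_congr rfl fun b _ => by ring
  have hterm (a b : ι) :=
    (integrable_mul_mul_exp_neg_half_dotProduct_self a b).const_mul (α * (u a * w b))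
  have hrow (a : ι) : ∫ x, ∑ b, α * (u a * w b) * (x a * x b * exp (-(1 / 2) * (x ⬝ᵥ x))) =
      α * (u a * w a) * √(2 * π) ^ Fintype.card ι := by
    rw [integral_finsetSum _ fun b _ => hterm a b]
    simp only [integral_const_mul, integral_mul_mul_exp_neg_half_dotProduct_self, mul_ite,
      mul_zero, Finset.sum_ite_eq, Finset.mem_univ, if_true]
  rw [hexpand, integral_add (integrable_finsetSum _ fun a _ => integrable_finsetSum _ fun b _ =>
      hterm a b) (integrable_exp_neg_half_dotProduct_self.const_mul β),
    integral_finsetSum _ fun a _ => integrable_finsetSum _ fun b _ => hterm a b,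
    integral_const_mul, integral_exp_neg_half_dotProduct_self]
  simp only [hrow, ← Finset.sum_mul, ← Finset.mul_sum]
  rw [dotProduct]
  ring

end StandardGaussian

section GaussianMoments

variable {ι : Type*} [Fintype ι] [DecidableEq ι]

lemma integral_comp_mulVec_add {E : Type*} [NormedAddCommGroup E] [NormedSpace ℝ E]
    {S : Matrix ι ι ℝ} (hS : S.det ≠ 0) (η : ι → ℝ) (f : (ι → ℝ) → E) :
    ∫ x, f (S *ᵥ x + η) = |S.det|⁻¹ • ∫ q, f q := by
  have hinj : Function.Injective (toLin' S) :=
    mulVec_injective_iff_isUnit.mpr ((isUnit_iff_isUnit_det S).mpr (isUnit_iff_ne_zero.mpr hS))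
  have hemb : MeasurableEmbedding (toLin' S) :=
    (LinearMap.isClosedEmbedding_of_injective (LinearMap.ker_eq_bot.mpr hinj)).measurableEmbedding
  calc ∫ x, f (S *ᵥ x + η) = ∫ y, f (y + η) ∂(Measure.map (toLin' S) volume) :=
        (hemb.integral_map (fun y => f (y + η))).symm
    _ = |S.det|⁻¹ • ∫ q, f q := by
        rw [Real.map_matrix_volume_pi_eq_smul_volume_pi hS, integral_smul_measure,
          integral_add_right_eq_self, ENNReal.toReal_ofReal (abs_nonneg _), abs_inv]

lemma Matrix.PosSemidef.exists_eq_mul_transpose {V : Matrix ι ι ℝ} (hV : V.PosSemidef) :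
    ∃ S : Matrix ι ι ℝ, V = S * Sᵀ := by
  open scoped MatrixOrder in
  obtain ⟨B, hB⟩ := CStarAlgebra.nonneg_iff_eq_star_mul_self.mp hV.nonneg
  exact ⟨Bᵀ, by simpa [star_eq_conjTranspose] using hB⟩

lemma mulVec_dotProduct_inv_mul_transpose_mulVec {S : Matrix ι ι ℝ} (hS : IsUnit S.det)
    (x : ι → ℝ) : S *ᵥ x ⬝ᵥ (S * Sᵀ)⁻¹ *ᵥ (S *ᵥ x) = x ⬝ᵥ x := by
  have hST : IsUnit Sᵀ.det := by rwa [det_transpose]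
  calc S *ᵥ x ⬝ᵥ (S * Sᵀ)⁻¹ *ᵥ (S *ᵥ x) = x ⬝ᵥ (Sᵀ * ((S * Sᵀ)⁻¹ * S)) *ᵥ x := by
        rw [mulVec_mulVec, ← vecMul_transpose, ← dotProduct_mulVec, mulVec_mulVec]
    _ = x ⬝ᵥ x := by
        rw [Matrix.mul_inv_rev, Matrix.mul_assoc, nonsing_inv_mul _ hS, Matrix.mul_one,
          mul_nonsing_inv _ hST, one_mulVec]

lemma integral_quadratic_mul_exp_neg_half_dotProduct_inv_mulVec {V : Matrix ι ι ℝ} (hV : V.PosDef)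
    (η u w : ι → ℝ) (α β : ℝ) :
    ∫ q, (α * ((u ⬝ᵥ (q - η)) * (w ⬝ᵥ (q - η))) + β) *
        exp (-(1 / 2) * ((q - η) ⬝ᵥ V⁻¹ *ᵥ (q - η))) =
      (α * (u ⬝ᵥ V *ᵥ w) + β) * √((2 * π) ^ Fintype.card ι * V.det) := by
  obtain ⟨S, rfl⟩ := hV.posSemidef.exists_eq_mul_transpose
  have hdet : (S * Sᵀ).det = S.det ^ 2 := by rw [det_mul, det_transpose, sq]
  have hS : S.det ≠ 0 := fun h => hV.det_pos.ne' (by rw [hdet, h, sq, mul_zero])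
  have hsubst := integral_comp_mulVec_add hS η fun q =>
    (α * ((u ⬝ᵥ (q - η)) * (w ⬝ᵥ (q - η))) + β) *
      exp (-(1 / 2) * ((q - η) ⬝ᵥ (S * Sᵀ)⁻¹ *ᵥ (q - η)))
  simp only [add_sub_cancel_right, dotProduct_mulVec _ S,
    mulVec_dotProduct_inv_mul_transpose_mulVec (isUnit_iff_ne_zero.mpr hS),
    integral_quadratic_mul_exp_neg_half_dotProduct_self] at hsubst
  rw [eq_inv_smul_iff₀ (abs_ne_zero.mpr hS)] at hsubst
  have hpow : √((2 * π) ^ Fintype.card ι) = √(2 * π) ^ Fintype.card ι := by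
    rw [show (2 * π) ^ Fintype.card ι = (√(2 * π) ^ Fintype.card ι) ^ 2 by
      rw [← pow_mul, pow_mul', sq_sqrt (by positivity)]]
    exact sqrt_sq (by positivity)
  have hform : u ᵥ* S ⬝ᵥ w ᵥ* S = u ⬝ᵥ (S * Sᵀ) *ᵥ w := by
    rw [← mulVec_mulVec, mulVec_transpose, dotProduct_mulVec]
  rw [← hsubst, smul_eq_mul, hdet, sqrt_mul (by positivity) (S.det ^ 2), sqrt_sq_eq_abs, hpow,
    hform]
  ring

end GaussianMoments

section Derivatives

variable {ι : Type*} [Fintype ι]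

noncomputable def dotProductCLM (w : ι → ℝ) : (ι → ℝ) →L[ℝ] ℝ :=
  LinearMap.toContinuousLinearMap (dotProductBilin ℝ ℝ w)

@[simp] lemma dotProductCLM_apply (w v : ι → ℝ) : dotProductCLM w v = w ⬝ᵥ v := rfl

lemma hasFDerivAt_dotProduct_sub (w η q : ι → ℝ) :
    HasFDerivAt (fun q => w ⬝ᵥ (q - η)) (dotProductCLM w) q := by
  have h := (dotProductCLM w).hasFDerivAt.sub_const (w ⬝ᵥ η) (x := q)
  simp only [dotProductCLM_apply, ← dotProduct_sub] at h
  exact h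

lemma hasFDerivAt_sub_dotProduct_mulVec_sub [DecidableEq ι] {M : Matrix ι ι ℝ} (hM : M.IsSymm)
    (η q : ι → ℝ) :
    HasFDerivAt (fun q => (q - η) ⬝ᵥ M *ᵥ (q - η))
      ((2 : ℝ) • dotProductCLM (M *ᵥ (q - η))) q := by
  have hsub : HasFDerivAt (fun q : ι → ℝ => q - η) (ContinuousLinearMap.id ℝ _) q :=
    (hasFDerivAt_id q).sub_const η
  have h := (toLinearMap₂' ℝ M).toContinuousBilinearMap.hasFDerivAt_of_bilinear hsub hsub
  simp only [LinearMap.toContinuousBilinearMap_apply, toLinearMap₂'_apply'] at h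
  refine h.congr_fderiv (ContinuousLinearMap.ext fun v => ?_)
  have hsymm : (q - η) ⬝ᵥ M *ᵥ v = v ⬝ᵥ M *ᵥ (q - η) := by
    rw [dotProduct_comm, dotProduct_mulVec, ← mulVec_transpose, hM.eq]
  simp only [_root_.add_apply, _root_.smul_apply, ContinuousLinearMap.precompR_apply,
    ContinuousLinearMap.precompL_apply, ContinuousLinearMap.compL_apply,
    ContinuousLinearMap.comp_id, ContinuousLinearMap.id_apply,
    LinearMap.toContinuousBilinearMap_apply, toLinearMap₂'_apply', dotProductCLM_apply,
    smul_eq_mul]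
  rw [hsymm, dotProduct_comm v]
  ring

end Derivatives

section GaussAmp

variable {n : ℕ} {η : Fin n → ℝ} {V : Matrix (Fin n) (Fin n) ℝ}

lemma pd_eq_of_hasFDerivAt {f : (Fin n → ℝ) → ℝ} {f' : (Fin n → ℝ) →L[ℝ] ℝ} {q : Fin n → ℝ}
    (j : Fin n) (h : HasFDerivAt f f' q) : pd j f q = f' (Pi.single j 1) := by
  rw [pd, h.fderiv]

lemma hasFDerivAt_gaussAmp (hV : V.IsSymm) (q : Fin n → ℝ) :
    HasFDerivAt (gaussAmp η V)
      ((-(1 / 2) * gaussAmp η V q) • dotProductCLM (V⁻¹ *ᵥ (q - η))) q := by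
  have h := (((hasFDerivAt_sub_dotProduct_mulVec_sub hV.inv η q).const_mul
    (-(1 / 4 : ℝ))).exp).const_mul (((2 * π) ^ n * V.det) ^ (-(1 / 4 : ℝ)))
  refine h.congr_fderiv ?_
  rw [gaussAmp, smul_smul, smul_smul, smul_smul]
  congr 1
  ring

lemma pd_gaussAmp (hV : V.IsSymm) (k : Fin n) :
    pd k (gaussAmp η V) = fun q => -(1 / 2) * (V⁻¹ *ᵥ (q - η)) k * gaussAmp η V q := by
  ext q
  rw [pd_eq_of_hasFDerivAt k (hasFDerivAt_gaussAmp hV q)]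
  simp only [_root_.smul_apply, dotProductCLM_apply, dotProduct_single, mul_one, smul_eq_mul]
  ring

lemma pd_pd_gaussAmp (hV : V.IsSymm) (j k : Fin n) (q : Fin n → ℝ) :
    pd j (pd k (gaussAmp η V)) q =
      (1 / 4 * ((V⁻¹ *ᵥ (q - η)) j * (V⁻¹ *ᵥ (q - η)) k) - 1 / 2 * V⁻¹ j k) *
        gaussAmp η V q := by
  have hcomp : HasFDerivAt (fun q => (V⁻¹ *ᵥ (q - η)) k) (dotProductCLM (V⁻¹ k)) q :=
    hasFDerivAt_dotProduct_sub (V⁻¹ k) η q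
  rw [pd_gaussAmp hV, pd_eq_of_hasFDerivAt j
    ((hcomp.const_mul (-(1 / 2))).fun_mul (hasFDerivAt_gaussAmp hV q))]
  simp only [_root_.add_apply, _root_.smul_apply, dotProductCLM_apply, dotProduct_single,
    mul_one, smul_eq_mul, hV.inv.apply]
  ring

lemma gaussAmp_mul_self (hV : 0 < V.det) (q : Fin n → ℝ) :
    gaussAmp η V q * gaussAmp η V q = ((2 * π) ^ n * V.det) ^ (-(1 / 2) : ℝ) *
      exp (-(1 / 2) * ((q - η) ⬝ᵥ V⁻¹ *ᵥ (q - η))) := by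
  rw [gaussAmp, mul_mul_mul_comm, ← rpow_add (by positivity), ← exp_add]
  congr 2 <;> ring

lemma integral_gaussAmp_mul_pd_pd_gaussAmp (hV : V.PosDef) (j k : Fin n) :
    ∫ q, gaussAmp η V q * pd j (pd k (gaussAmp η V)) q = -(1 / 4) * V⁻¹ j k := by
  have hsymm : V.IsSymm := isHermitian_iff_isSymm.mp hV.isHermitian
  set X := (2 * π) ^ n * V.det
  have hX : 0 < X := mul_pos (by positivity) hV.det_pos
  have hintegrand : (fun q => gaussAmp η V q * pd j (pd k (gaussAmp η V)) q) = fun q =>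
      X ^ (-(1 / 2) : ℝ) * ((1 / 4 * ((V⁻¹ j ⬝ᵥ (q - η)) * (V⁻¹ k ⬝ᵥ (q - η))) +
        -(1 / 2) * V⁻¹ j k) * exp (-(1 / 2) * ((q - η) ⬝ᵥ V⁻¹ *ᵥ (q - η)))) := by
    ext q
    have hrow (i : Fin n) : (V⁻¹ *ᵥ (q - η)) i = V⁻¹ i ⬝ᵥ (q - η) := rfl
    rw [pd_pd_gaussAmp hsymm, hrow, hrow]
    calc _ = (gaussAmp η V q * gaussAmp η V q) *
          (1 / 4 * (V⁻¹ j ⬝ᵥ (q - η) * V⁻¹ k ⬝ᵥ (q - η)) - 1 / 2 * V⁻¹ j k) := by ring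
      _ = _ := by rw [gaussAmp_mul_self hV.det_pos]; ring
  have hrows : V⁻¹ j ⬝ᵥ V *ᵥ V⁻¹ k = V⁻¹ j k := by
    rw [dotProduct_mulVec, ← mul_apply_eq_vecMul,
      nonsing_inv_mul _ ((isUnit_iff_isUnit_det V).mp hV.isUnit)]
    simp [dotProduct, one_apply, hsymm.inv.apply j k]
  have hnorm : X ^ (-(1 / 2) : ℝ) * √X = 1 := by
    rw [sqrt_eq_rpow, ← rpow_add hX]
    norm_num
  rw [hintegrand, integral_const_mul, integral_quadratic_mul_exp_neg_half_dotProduct_inv_mulVec hV,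
    Fintype.card_fin, hrows]
  linear_combination (-(1 / 4) * V⁻¹ j k) * hnorm

end GaussAmp

theorem Vnc_gaussian_general {n : ℕ} (hbar : ℝ)
    (η : Fin n → ℝ) (V : Matrix (Fin n) (Fin n) ℝ) (hV : V.PosDef) :
    Vnc hbar (gaussAmp η V) = (hbar ^ 2 / 4) • V⁻¹ ∧
    V * Vnc hbar (gaussAmp η V) = (hbar ^ 2 / 4) • (1 : Matrix (Fin n) (Fin n) ℝ) := by
  have hVnc : Vnc hbar (gaussAmp η V) = (hbar ^ 2 / 4) • V⁻¹ := by
    ext j k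
    rw [Vnc, of_apply, integral_gaussAmp_mul_pd_pd_gaussAmp hV, Matrix.smul_apply, smul_eq_mul]
    ring
  refine ⟨hVnc, ?_⟩
  rw [hVnc, Matrix.mul_smul, mul_nonsing_inv _ ((isUnit_iff_isUnit_det V).mp hV.isUnit)]

/-- for the Gaussian amplitude with covariance `V`,
`Ṽnc = (ħ²/4) V⁻¹`, equivalently `V ⋅ Ṽnc = (ħ²/4) 𝟙`. -/
theorem Vnc_gaussian {n : ℕ} (hn : 1 ≤ n) (hbar : ℝ) (hhbar : 0 < hbar)
    (η : Fin n → ℝ) (V : Matrix (Fin n) (Fin n) ℝ) (hV : V.PosDef) :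
    Vnc hbar (gaussAmp η V) = (hbar ^ 2 / 4) • V⁻¹ ∧
    V * Vnc hbar (gaussAmp η V) = (hbar ^ 2 / 4) • (1 : Matrix (Fin n) (Fin n) ℝ) :=
  Vnc_gaussian_general hbar η V hV
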